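/- arXiv:1106.5138 — 2 statements merged into one kernel-verified Lean document; each statement's English description precedes it below -/
import Mathlib

section
/- Let z : ℤ → ℝ be a discrete path on {-N,…,0} with z[-N] = 0 and z[-N] - z[-N+1] ≤ K, and suppose z[0] ≥ -F·N, where F, K ≥ 0 and Δ_d z[i] + F̄ has positive part bounded in sum, with F̄ > 0. Then F̄·N(N-1)/2 - (F+K)·N ≤ 2(N-1)·∑_{i=-N+1}^{-1} (Δ_d z[i] + F̄)₊. -/
/-!
If the Laplacian of `w` is bounded by a nonnegative `m` on `(a, b)`, every forward difference
`w (i+1) - w i` exceeds the first one by at most `∑ m`, and summing them bounds `w b - w a`.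
Applied to `w = z + F̄ (i + N)² / 2`, whose Laplacian is `Δ_d z + F̄ ≤ (Δ_d z + F̄)₊`, this gives
`z 0 ≤ N (K + S) - F̄ N (N - 1) / 2` with `S` the sum of positive parts; against `z 0 ≥ -F N`
this is the claim, as `N ≤ 2 (N - 1)`.
-/

open Finset

def discreteLaplacian (z : ℤ → ℝ) (i : ℤ) : ℝ := z (i + 1) - 2 * z i + z (i - 1)

section Telescoping

variable {M : Type*} [AddCommGroup M]

theorem Int.sum_Ico_sub (f : ℤ → M) {a b : ℤ} (hab : a ≤ b) :
    ∑ i ∈ Ico a b, (f (i + 1) - f i) = f b - f a := by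
  induction b, hab using Int.leInduction with
  | base => simp
  | succ b hab ih =>
    rw [← insert_Ico_right_eq_Ico_add_one hab, sum_insert (by simp), ih]
    abel

theorem Int.sum_Ioc_sub (f : ℤ → M) {a b : ℤ} (hab : a ≤ b) :
    ∑ i ∈ Ioc a b, (f i - f (i - 1)) = f b - f a := by
  induction b, hab using Int.leInduction with
  | base => simp
  | succ b hab ih =>
    rw [← insert_Ioc_right_eq_Ioc_add_one hab, sum_insert (by simp), ih, add_sub_cancel_right]
    abel

end Telescoping

theorem sub_le_of_discreteLaplacian_le {w m : ℤ → ℝ} {a b : ℤ} (hab : a ≤ b)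
    (hm : ∀ j ∈ Ioo a b, 0 ≤ m j) (hΔ : ∀ j ∈ Ioo a b, discreteLaplacian w j ≤ m j) :
    w b - w a ≤ (b - a) * (w (a + 1) - w a + ∑ j ∈ Ioo a b, m j) := by
  have gradient_le : ∀ i ∈ Ico a b, w (i + 1) - w i ≤ w (a + 1) - w a + ∑ j ∈ Ioo a b, m j := by
    intro i hi
    obtain ⟨hai, hib⟩ := mem_Ico.mp hi
    have hsub : Ioc a i ⊆ Ioo a b := fun j hj ↦ by
      simp only [mem_Ioc, mem_Ioo] at hj ⊢; omega
    have laplacian_sum : ∑ j ∈ Ioc a i, discreteLaplacian w j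
        = (w (i + 1) - w i) - (w (a + 1) - w a) := by
      rw [← Int.sum_Ioc_sub (fun j ↦ w (j + 1) - w j) hai]
      refine sum_congr rfl fun j _ ↦ ?_
      simp only [discreteLaplacian, sub_add_cancel]
      ring
    calc w (i + 1) - w i = w (a + 1) - w a + ∑ j ∈ Ioc a i, discreteLaplacian w j := by
          rw [laplacian_sum]; ring
      _ ≤ w (a + 1) - w a + ∑ j ∈ Ioc a i, m j :=
          (add_le_add_iff_left _).2 (sum_le_sum fun j hj ↦ hΔ j (hsub hj))
      _ ≤ w (a + 1) - w a + ∑ j ∈ Ioo a b, m j :=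
          (add_le_add_iff_left _).2 (sum_le_sum_of_subset_of_nonneg hsub fun j hj _ ↦ hm j hj)
  calc w b - w a = ∑ i ∈ Ico a b, (w (i + 1) - w i) := (Int.sum_Ico_sub w hab).symm
    _ ≤ ∑ _i ∈ Ico a b, (w (a + 1) - w a + ∑ j ∈ Ioo a b, m j) := sum_le_sum gradient_le
    _ = (b - a) * (w (a + 1) - w a + ∑ j ∈ Ioo a b, m j) := by
      rw [sum_const, Int.card_Ico, nsmul_eq_mul, ← Int.cast_natCast,
        Int.toNat_of_nonneg (by omega), Int.cast_sub]

theorem sub_le_of_discreteLaplacian_add_le {z m : ℤ → ℝ} {a b : ℤ} (c : ℝ) (hab : a ≤ b)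
    (hm : ∀ j ∈ Ioo a b, 0 ≤ m j) (hΔ : ∀ j ∈ Ioo a b, discreteLaplacian z j + c ≤ m j) :
    z b - z a ≤
      (b - a) * (z (a + 1) - z a + ∑ j ∈ Ioo a b, m j) - c * (b - a) * (b - a - 1) / 2 := by
  set w : ℤ → ℝ := fun i ↦ z i + c * ((i : ℝ) - a) ^ 2 / 2
  have laplacian_w (j : ℤ) : discreteLaplacian w j = discreteLaplacian z j + c := by
    simp only [w, discreteLaplacian]
    push_cast
    ring
  have := sub_le_of_discreteLaplacian_le hab hm fun j hj ↦ (laplacian_w j).trans_le (hΔ j hj)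
  simp only [w] at this
  push_cast at this
  linarith

theorem crossing_laplacian_bound_general (N : ℕ) (hN : 2 ≤ N) (z : ℤ → ℝ) (F K Fbar : ℝ)
    (hz0 : z (-(N : ℤ)) = 0)
    (hgrad : -(z (-(N : ℤ)) - z (-(N : ℤ) + 1)) ≤ K)
    (hcross : z 0 ≥ -F * N) :
    Fbar * N * (N - 1) / 2 - (F + K) * N ≤
      2 * (N - 1) *
        ∑ i ∈ Icc (-(N : ℤ) + 1) (-1),
          max ((z (i + 1) - 2 * z i + z (i - 1)) + Fbar) 0 := by
  have hbound := sub_le_of_discreteLaplacian_add_le (z := z) (a := -N) (b := 0)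
    (m := fun i ↦ max (discreteLaplacian z i + Fbar) 0) Fbar (by omega)
    (fun _ _ ↦ le_max_right _ _) (fun _ _ ↦ le_max_left _ _)
  have hIoo : Ioo (-(N : ℤ)) 0 = Icc (-(N : ℤ) + 1) (-1) := by
    ext; simp only [mem_Ioo, mem_Icc]; omega
  rw [hIoo, hz0] at hbound
  set S := ∑ i ∈ Icc (-(N : ℤ) + 1) (-1), max (discreteLaplacian z i + Fbar) 0
  have hS : 0 ≤ S := sum_nonneg fun _ _ ↦ le_max_right _ _
  have hN' : (2 : ℝ) ≤ N := by exact_mod_cast hN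
  have hgrad' : z (-(N : ℤ) + 1) ≤ K := by linarith
  push_cast at hbound
  change _ ≤ 2 * (N - 1) * S
  nlinarith [mul_le_mul_of_nonneg_left hgrad' (by positivity : (0 : ℝ) ≤ N),
    mul_nonneg (sub_nonneg.2 hN') hS]

theorem crossing_laplacian_bound (N : ℕ) (hN : 2 ≤ N) (z : ℤ → ℝ) (F K Fbar : ℝ)
    (hF : 0 ≤ F) (hK : 0 ≤ K) (hFbar : 0 ≤ Fbar)
    (hz0 : z (-(N : ℤ)) = 0)
    (hgrad : -(z (-(N : ℤ)) - z (-(N : ℤ) + 1)) ≤ K)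
    (hcross : z 0 ≥ -F * N) :
    Fbar * N * (N - 1) / 2 - (F + K) * N ≤
      2 * (N - 1) *
        ∑ i ∈ Icc (-(N : ℤ) + 1) (-1),
          max ((z (i + 1) - 2 * z i + z (i - 1)) + Fbar) 0 :=
  crossing_laplacian_bound_general N hN z F K Fbar hz0 hgrad hcross
end

section
/- Let v be C¹ on [a-δ, b+δ] with v convex on [b-δ, b+δ], v'' ≥ -F on [a, b-δ] (in fact v'' = -F there). Let w be the affine function on [a, b+δ] with w(a) = v(a) and w(b+δ) = v(b-δ) + 2δ v'(b-δ). Then w ≤ v on [a, b+δ]. -/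
/-!
`v` is concave on `[a, b - δ]` and convex on `[b - δ, b + δ]`. Let `σ` be the slope of the chord
of `v` over `[a, b - δ]` and `m = v' (b - δ)`; concavity gives `m ≤ σ`, and the slope of `w` is
the mean of `σ` and `m` weighted by `b - δ - a` and `2δ`. On `[a, b - δ]` the chord slopes of `v`
from `a` are at least `σ`; on `[b - δ, b + δ]` the graph of `v` lies above its tangent at `b - δ`.
-/

open Set

lemma eq_add_sub_mul_slope (f : ℝ → ℝ) (p q : ℝ) : f q = f p + (q - p) * slope f p q := by
  rw [← smul_eq_mul, sub_smul_slope, vsub_eq_sub, add_sub_cancel]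

lemma convexOn_Icc_of_hasDerivAt_of_monotoneOn {f f' : ℝ → ℝ} {p q : ℝ}
    (hf : ∀ x ∈ Icc p q, HasDerivAt f (f' x) x) (hf' : MonotoneOn f' (Icc p q)) :
    ConvexOn ℝ (Icc p q) f := by
  have hderiv : EqOn (deriv f) f' (Ioo p q) := fun x hx => (hf x (Ioo_subset_Icc_self hx)).deriv
  refine MonotoneOn.convexOn_of_deriv (convex_Icc p q)
    (fun x hx => (hf x hx).continuousAt.continuousWithinAt) ?_ ?_ <;> rw [interior_Icc]
  · exact fun x hx => (hf x (Ioo_subset_Icc_self hx)).differentiableAt.differentiableWithinAt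
  · exact (hf'.mono Ioo_subset_Icc_self).congr hderiv.symm

lemma concaveOn_Icc_of_hasDerivAt2_nonpos {f f' f'' : ℝ → ℝ} {p q : ℝ}
    (hf : ∀ x ∈ Icc p q, HasDerivAt f (f' x) x) (hf' : ∀ x ∈ Icc p q, HasDerivAt f' (f'' x) x)
    (hf'' : ∀ x ∈ Icc p q, f'' x ≤ 0) : ConcaveOn ℝ (Icc p q) f := by
  refine concaveOn_of_hasDerivWithinAt2_nonpos (f' := f') (f'' := f'') (convex_Icc p q)
    (fun x hx => (hf x hx).continuousAt.continuousWithinAt) ?_ ?_ ?_ <;> rw [interior_Icc] <;>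
    intro x hx
  · exact (hf x (Ioo_subset_Icc_self hx)).hasDerivWithinAt
  · exact (hf' x (Ioo_subset_Icc_self hx)).hasDerivWithinAt
  · exact hf'' x (Ioo_subset_Icc_self hx)

theorem affine_below_path (δ F a b : ℝ) (hδ : 0 < δ) (hab : a < b - δ) (hF : 0 ≤ F)
    (v v' : ℝ → ℝ)
    (hderiv : ∀ x ∈ Icc a (b + δ), HasDerivAt v (v' x) x)
    (hode : ∀ x ∈ Icc a (b - δ), HasDerivAt v' (-F) x)
    (hconv : MonotoneOn v' (Icc (b - δ) (b + δ)))
    (w : ℝ → ℝ)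
    (hw : ∀ x, w x = v a + (x - a) / (b + δ - a) * ((v (b - δ) + 2 * δ * v' (b - δ)) - v a)) :
    ∀ x ∈ Icc a (b + δ), w x ≤ v x := by
  have hconcave : ConcaveOn ℝ (Icc a (b - δ)) v :=
    concaveOn_Icc_of_hasDerivAt2_nonpos (fun x hx => hderiv x ⟨hx.1, by linarith [hx.2]⟩) hode
      fun _ _ => neg_nonpos.2 hF
  have hconvex : ConvexOn ℝ (Icc (b - δ) (b + δ)) v :=
    convexOn_Icc_of_hasDerivAt_of_monotoneOn (fun x hx => hderiv x ⟨by linarith [hx.1], hx.2⟩)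
      hconv
  have ha : a ∈ Icc a (b - δ) := left_mem_Icc.2 hab.le
  have hc : b - δ ∈ Icc a (b - δ) := right_mem_Icc.2 hab.le
  have hm : v' (b - δ) ≤ slope v a (b - δ) :=
    hconcave.le_slope_of_hasDerivAt ha hc hab (hderiv _ ⟨hab.le, by linarith⟩)
  have hvc := eq_add_sub_mul_slope v a (b - δ)
  have hden : 0 < b + δ - a := by linarith
  intro x hx
  rw [hw, ← le_sub_iff_add_le', div_mul_eq_mul_div, div_le_iff₀ hden]
  rcases le_or_gt x (b - δ) with hxc | hcx
  · rcases hx.1.eq_or_lt with rfl | hax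
    · simp
    have hσ : slope v a (b - δ) ≤ slope v a x :=
      hconcave.antitoneOn_slope_gt ha ⟨⟨hax.le, hxc⟩, hax⟩ ⟨hc, hab⟩ hxc
    rw [eq_add_sub_mul_slope v a x, hvc]
    nlinarith [mul_le_mul_of_nonneg_left hσ (mul_nonneg (sub_nonneg.2 hax.le) hden.le),
      mul_le_mul_of_nonneg_left hm (mul_nonneg (sub_nonneg.2 hax.le) hδ.le)]
  · have hτ : v' (b - δ) ≤ slope v (b - δ) x :=
      hconvex.le_slope_of_hasDerivAt (left_mem_Icc.2 (by linarith)) ⟨hcx.le, hx.2⟩ hcx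
        (hderiv _ ⟨hab.le, by linarith⟩)
    rw [eq_add_sub_mul_slope v (b - δ) x, hvc]
    nlinarith [mul_le_mul_of_nonneg_left hτ (mul_nonneg (sub_nonneg.2 hcx.le) hden.le),
      mul_nonneg (mul_nonneg (sub_nonneg.2 hx.2) (sub_nonneg.2 hab.le)) (sub_nonneg.2 hm)]
end
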